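/- arXiv:1104.2766 — 5 statements merged into one kernel-verified Lean document; each statement's English description precedes it below -/
import Mathlib

section
/- Let V be a real inner product space, p ∈ V with t = ‖p‖²/2, and a₁, b₁, a₂, b₂ ∈ ℝ. Define A, B : V → V by A(x) = a₁·x + b₁·⟨p,x⟩·p and B(x) = a₂·x + b₂·⟨p,x⟩·p. If a₁·a₂ = 1 and (a₁ + 2t·b₁)·(a₂ + 2t·b₂) = 1, then A ∘ B = id and B ∘ A = id. -/
open InnerProductSpace

theorem stmt_3 {V : Type*} [NormedAddCommGroup V] [InnerProductSpace ℝ V]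
    (p : V) (t a₁ b₁ a₂ b₂ : ℝ) (ht : t = ‖p‖ ^ 2 / 2)
    (A B : V → V)
    (hA : ∀ x, A x = a₁ • x + (b₁ * ⟪p, x⟫_ℝ) • p)
    (hB : ∀ x, B x = a₂ • x + (b₂ * ⟪p, x⟫_ℝ) • p)
    (h1 : a₁ * a₂ = 1) (h2 : (a₁ + 2 * t * b₁) * (a₂ + 2 * t * b₂) = 1) :
    A ∘ B = id ∧ B ∘ A = id := by
  have hpt : ⟪p, p⟫_ℝ = 2 * t := by
    rw [real_inner_self_eq_norm_sq, ht]; ring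
  have key : ∀ (c₁ d₁ c₂ d₂ : ℝ), c₁ * c₂ = 1 →
      (c₁ + 2 * t * d₁) * (c₂ + 2 * t * d₂) = 1 →
      (∀ x, (fun y => c₁ • y + (d₁ * ⟪p, y⟫_ℝ) • p)
        ((fun y => c₂ • y + (d₂ * ⟪p, y⟫_ℝ) • p) x) = x) := by
    intro c₁ d₁ c₂ d₂ g1 g2 x
    simp only [inner_add_right, real_inner_smul_right, smul_add, smul_smul, hpt]
    rw [add_assoc, ← add_smul]
    have : c₁ * c₂ = 1 := g1
    rcases eq_or_ne t 0 with h0 | h0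
    · have hp0 : p = 0 := by
        have : ‖p‖ = 0 := by
          have := ht; rw [h0] at this
          nlinarith [norm_nonneg p]
        simpa using this
      simp [hp0, this]
    · have hc : c₁ * (d₂ * ⟪p, x⟫_ℝ) + (d₁ * (c₂ * ⟪p, x⟫_ℝ + d₂ * ⟪p, x⟫_ℝ * (2 * t))) = 0 := by
        have : c₁ * d₂ + d₁ * c₂ + 2 * t * d₁ * d₂ = 0 := by
          have h2t : (2 * t) * (c₁ * d₂ + d₁ * c₂ + 2 * t * d₁ * d₂) = 0 := by nlinarith
          have : (2 * t) ≠ 0 := by simpa using h0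
          exact (mul_eq_zero.mp h2t).resolve_left this
        linear_combination ⟪p, x⟫_ℝ * this
      rw [hc]
      simp [this]
  constructor <;> funext x <;> simp only [Function.comp, hA, hB, id]
  · exact key a₁ b₁ a₂ b₂ h1 h2 x
  · exact key a₂ b₂ a₁ b₁ (by linarith [h1, mul_comm a₁ a₂]) (by linarith [h2, mul_comm (a₁ + 2*t*b₁) (a₂ + 2*t*b₂)]) x
end

section
/- Let a₁ : ℝ → ℝ be smooth with a₁(t) ≠ 0 and a₁(t) − 2t·a₁'(t) ≠ 0 for all t ≥ 0, let c ∈ ℝ, and define a₂ = 1/a₁, b₁(t) = (a₁(t)·a₁'(t) + c)/(a₁(t) − 2t·a₁'(t)), b₂(t) = (a₁(t)·a₂'(t) − a₂(t)²·c)/(a₁(t) + 2c·t·a₂(t)), assuming a₁ + 2cta₂ ≠ 0. Then for all t ≥ 0 with a₂(t) + 2t·b₂(t) ≠ 0: b₁(t) = −a₁(t)·b₂(t)/(a₂(t) + 2t·b₂(t)). -/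
theorem stmt_5 (a₁ : ℝ → ℝ) (ha : ContDiff ℝ (⊤ : ℕ∞) a₁) (c : ℝ)
    (h1 : ∀ t ≥ (0 : ℝ), a₁ t ≠ 0)
    (h2 : ∀ t ≥ (0 : ℝ), a₁ t - 2 * t * deriv a₁ t ≠ 0)
    (a₂ b₁ b₂ : ℝ → ℝ)
    (ha₂ : ∀ t, a₂ t = 1 / a₁ t)
    (hb₁ : ∀ t, b₁ t = (a₁ t * deriv a₁ t + c) / (a₁ t - 2 * t * deriv a₁ t))
    (h3 : ∀ t ≥ (0 : ℝ), a₁ t + 2 * c * t * a₂ t ≠ 0)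
    (hb₂ : ∀ t, b₂ t = (a₁ t * deriv a₂ t - (a₂ t) ^ 2 * c) / (a₁ t + 2 * c * t * a₂ t)) :
    ∀ t ≥ (0 : ℝ), a₂ t + 2 * t * b₂ t ≠ 0 →
      b₁ t = -(a₁ t * b₂ t) / (a₂ t + 2 * t * b₂ t) := by
  intro t ht hne
  have hA := h1 t ht
  have hD := h2 t ht
  have h3' := h3 t ht
  have ha₂f : a₂ = fun s => (a₁ s)⁻¹ := funext fun s => by rw [ha₂, one_div]
  have hd : deriv a₂ t = -deriv a₁ t / a₁ t ^ 2 := by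
    rw [ha₂f]
    exact (((ha.differentiable (by simp) t).hasDerivAt).inv hA).deriv
  rw [ha₂ t] at h3'
  have hK : a₁ t ^ 2 + 2 * c * t ≠ 0 := by
    intro h
    apply h3'
    field_simp
    linarith [h]
  rw [ha₂ t, hb₂ t, hd, ha₂ t] at hne ⊢
  rw [hb₁ t]
  have hK2 : a₁ t ^ 2 * (a₁ t ^ 2 + 2 * c * t) ≠ 0 := mul_ne_zero (pow_ne_zero _ hA) hK
  rw [div_eq_div_iff hD hne]
  field_simp
  ring_nf
  have hK' : a₁ t ^ 2 + c * t * 2 ≠ 0 := by rwa [show a₁ t ^ 2 + c * t * 2 = a₁ t ^ 2 + 2 * c * t by ring]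
  field_simp
  ring
end

section
/- Let V be a real inner product space with dim V ≥ 2, p ∈ V, t = ‖p‖²/2, and real numbers a₁, b₁, a₂, b₂, c₁, d₁, c₂, d₂ and ε ∈ {1, −1}. Define bilinear forms G₁(x,y) = c₁⟨x,y⟩ + d₁⟨p,x⟩⟨p,y⟩ and G₂(x,y) = c₂⟨x,y⟩ + d₂⟨p,x⟩⟨p,y⟩, and linear maps A(x) = a₁x + b₁⟨p,x⟩p, B(x) = a₂x + b₂⟨p,x⟩p. Suppose a₁a₂ = 1, (a₁+2tb₁)(a₂+2tb₂) = 1, c₁ = λ·a₁, c₂ = ε·λ·a₂, c₁ + 2td₁ = (λ+2tμ)(a₁+2tb₁), and c₂ + 2td₂ = ε(λ+2tμ)(a₂+2tb₂) for some λ, μ ∈ ℝ. Then G₂(A x, A y) = ε·G₁(x,y) for all x, y ∈ V. -/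
open InnerProductSpace

theorem stmt_7 {V : Type*} [NormedAddCommGroup V] [InnerProductSpace ℝ V]
    (hdim : 2 ≤ Module.finrank ℝ V)
    (p : V) (t a₁ b₁ a₂ b₂ c₁ d₁ c₂ d₂ ε l μ : ℝ) (ht : t = ‖p‖ ^ 2 / 2)
    (hε : ε = 1 ∨ ε = -1)
    (G₁ G₂ : V → V → ℝ) (A B : V → V)
    (hG₁ : ∀ x y, G₁ x y = c₁ * ⟪x, y⟫_ℝ + d₁ * (⟪p, x⟫_ℝ * ⟪p, y⟫_ℝ))
    (hG₂ : ∀ x y, G₂ x y = c₂ * ⟪x, y⟫_ℝ + d₂ * (⟪p, x⟫_ℝ * ⟪p, y⟫_ℝ))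
    (hA : ∀ x, A x = a₁ • x + (b₁ * ⟪p, x⟫_ℝ) • p)
    (hB : ∀ x, B x = a₂ • x + (b₂ * ⟪p, x⟫_ℝ) • p)
    (h1 : a₁ * a₂ = 1) (h2 : (a₁ + 2 * t * b₁) * (a₂ + 2 * t * b₂) = 1)
    (hc₁ : c₁ = l * a₁) (hc₂ : c₂ = ε * l * a₂)
    (hd₁ : c₁ + 2 * t * d₁ = (l + 2 * t * μ) * (a₁ + 2 * t * b₁))
    (hd₂ : c₂ + 2 * t * d₂ = ε * (l + 2 * t * μ) * (a₂ + 2 * t * b₂)) :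
    ∀ x y : V, G₂ (A x) (A y) = ε * G₁ x y := by
  have hcoef1 : c₂ * a₁ ^ 2 = ε * c₁ := by
    linear_combination a₁ ^ 2 * hc₂ + ε * l * a₁ * h1 - ε * hc₁
  have hpp : ⟪p, p⟫_ℝ = 2 * t := by
    rw [real_inner_self_eq_norm_sq, ht]; ring
  intro x y
  simp only [hG₁, hG₂, hA, inner_add_left, inner_add_right, inner_smul_left,
    inner_smul_right, RCLike.ofReal_real_eq_id, id_eq, conj_trivial, hpp]
  have hxp : ⟪x, p⟫_ℝ = ⟪p, x⟫_ℝ := real_inner_comm p x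
  by_cases hp : p = 0
  · simp [hp]
    linear_combination ⟪x, y⟫_ℝ * hcoef1
  · have h2t : (2 * t : ℝ) ≠ 0 := by
      rw [ht]
      have : ‖p‖ ≠ 0 := norm_ne_zero_iff.mpr hp
      positivity
    have key : c₂ * (2 * a₁ * b₁ + 2 * t * b₁ ^ 2) + d₂ * (a₁ + 2 * t * b₁) ^ 2
        = ε * d₁ := by
      have hEq : (2 * t) * (c₂ * (2 * a₁ * b₁ + 2 * t * b₁ ^ 2) + d₂ * (a₁ + 2 * t * b₁) ^ 2)
          = (2 * t) * (ε * d₁) := by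
        linear_combination (a₁ + 2 * t * b₁) ^ 2 * hd₂
          + ε * (l + 2 * t * μ) * (a₁ + 2 * t * b₁) * h2
          - ε * hd₁ - hcoef1
      exact mul_left_cancel₀ h2t hEq
    linear_combination ⟪x, y⟫_ℝ * hcoef1 + (⟪p, x⟫_ℝ * ⟪p, y⟫_ℝ) * key
      + (c₂ * a₁ * b₁ + 2 * t * c₂ * b₁ ^ 2 + (a₁ + 2 * t * b₁) * 2 * t * b₁ * d₂
         - 2 * t * b₁ * (c₂ * b₁ + (a₁ + 2 * t * b₁) * d₂)) * ⟪p, y⟫_ℝ * hxp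
end

section
/- Let V be a real inner product space with dim V > 1, fix p ∈ V with p ≠ 0 and t = ‖p‖²/2. Let a₁, b₁, c₁, d₁, c₂, d₂ ∈ ℝ with a₁ ≠ 0 and a₁ + 2tb₁ ≠ 0, ε ∈ {1,−1}, and define A(x) = a₁x + b₁⟨p,x⟩p, G₁(x,y) = c₁⟨x,y⟩ + d₁⟨p,x⟩⟨p,y⟩, G₂(x,y) = c₂⟨x,y⟩ + d₂⟨p,x⟩⟨p,y⟩. If G₂(A x, A y) = ε·G₁(x,y) for all x, y ∈ V, then ε·c₁ = a₁²·c₂ and ε·(c₁ + 2td₁) = (a₁ + 2tb₁)²·(c₂ + 2td₂). -/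
open InnerProductSpace

theorem stmt_8 {V : Type*} [NormedAddCommGroup V] [InnerProductSpace ℝ V]
    [FiniteDimensional ℝ V] (hdim : 1 < Module.finrank ℝ V)
    (p : V) (hp : p ≠ 0) (t a₁ b₁ c₁ d₁ c₂ d₂ ε : ℝ) (ht : t = ‖p‖ ^ 2 / 2)
    (ha₁ : a₁ ≠ 0) (hab : a₁ + 2 * t * b₁ ≠ 0) (hε : ε = 1 ∨ ε = -1)
    (A : V → V) (G₁ G₂ : V → V → ℝ)
    (hA : ∀ x, A x = a₁ • x + (b₁ * ⟪p, x⟫_ℝ) • p)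
    (hG₁ : ∀ x y, G₁ x y = c₁ * ⟪x, y⟫_ℝ + d₁ * (⟪p, x⟫_ℝ * ⟪p, y⟫_ℝ))
    (hG₂ : ∀ x y, G₂ x y = c₂ * ⟪x, y⟫_ℝ + d₂ * (⟪p, x⟫_ℝ * ⟪p, y⟫_ℝ))
    (h : ∀ x y : V, G₂ (A x) (A y) = ε * G₁ x y) :
    ε * c₁ = a₁ ^ 2 * c₂ ∧
      ε * (c₁ + 2 * t * d₁) = (a₁ + 2 * t * b₁) ^ 2 * (c₂ + 2 * t * d₂) := by
  have hpp : ⟪p, p⟫_ℝ = 2 * t := by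
    rw [real_inner_self_eq_norm_sq, ht]; ring
  have ht0 : (2 : ℝ) * t ≠ 0 := by
    rw [← hpp]
    simpa using hp
  -- find q orthogonal to p, nonzero
  have hspan : (ℝ ∙ p) ≠ ⊤ := by
    intro hT
    have := finrank_span_singleton (K := ℝ) hp
    rw [hT, finrank_top] at this
    omega
  have horth : ((ℝ ∙ p)ᗮ : Submodule ℝ V) ≠ ⊥ := by
    intro hb
    exact hspan (Submodule.orthogonal_eq_bot_iff.mp hb)
  obtain ⟨q, hqmem, hq0⟩ := Submodule.exists_mem_ne_zero_of_ne_bot horth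
  have hpq : ⟪p, q⟫_ℝ = 0 := by
    exact hqmem p (Submodule.mem_span_singleton_self p)
  constructor
  · have hq := h q q
    rw [hG₁, hG₂, hA] at hq
    simp only [hpq, mul_zero, zero_smul, add_zero, inner_smul_left, inner_smul_right,
      RCLike.conj_to_real] at hq
    have hqq : ⟪q, q⟫_ℝ ≠ 0 := by simpa using hq0
    have : ε * c₁ * ⟪q, q⟫_ℝ = a₁ ^ 2 * c₂ * ⟪q, q⟫_ℝ := by
      nlinarith [hq]
    exact mul_right_cancel₀ hqq this
  · have hq := h p p
    rw [hG₁, hG₂, hA] at hq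
    simp only [inner_smul_left, inner_smul_right, inner_add_left, inner_add_right,
      RCLike.conj_to_real, hpp] at hq
    have : ε * (c₁ + 2 * t * d₁) * (2 * t) = (a₁ + 2 * t * b₁) ^ 2 * (c₂ + 2 * t * d₂) * (2 * t) := by
      nlinarith [hq]
    exact mul_right_cancel₀ ht0 this
end

section
/- Let c₁, d₁, c₂, d₂ : ℝ → ℝ be functions with c₁(t)·c₂(t) ≠ 0 and (c₁(t)+2t·d₁(t))·(c₂(t)+2t·d₂(t)) ≠ 0 for all t ≥ 0. Then for each p in a finite-dimensional inner product space V with t = ‖p‖²/2, the symmetric bilinear form on V ⊕ V given by G((x,α),(y,ω)) = c₁(t)⟨x,y⟩ + d₁(t)⟨p,x⟩⟨p,y⟩ + c₂(t)⟨α,ω⟩ + d₂(t)⟨p,α⟩⟨p,ω⟩ is nondegenerate. -/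
open InnerProductSpace

lemma aux_block {V : Type*} [NormedAddCommGroup V] [InnerProductSpace ℝ V]
    (c d : ℝ) (p x : V) (hc : c ≠ 0) (hcd : c + ‖p‖ ^ 2 * d ≠ 0)
    (h : ∀ y : V, c * ⟪x, y⟫_ℝ + d * (⟪p, x⟫_ℝ * ⟪p, y⟫_ℝ) = 0) : x = 0 := by
  have hp := h p
  rw [real_inner_self_eq_norm_sq, real_inner_comm x p] at hp
  have hpx : ⟪x, p⟫_ℝ = 0 := by
    have h0 : (c + ‖p‖ ^ 2 * d) * ⟪x, p⟫_ℝ = 0 := by linear_combination hp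
    exact (mul_eq_zero.mp h0).resolve_left hcd
  have hpx' : ⟪p, x⟫_ℝ = 0 := by rw [real_inner_comm]; exact hpx
  have hx := h x
  rw [hpx', zero_mul, mul_zero, add_zero] at hx
  have : ⟪x, x⟫_ℝ = 0 := (mul_eq_zero.mp hx).resolve_left hc
  exact inner_self_eq_zero.mp this

theorem stmt_9 {V : Type*} [NormedAddCommGroup V] [InnerProductSpace ℝ V]
    [FiniteDimensional ℝ V]
    (c₁ d₁ c₂ d₂ : ℝ → ℝ)
    (h1 : ∀ t ≥ (0 : ℝ), c₁ t * c₂ t ≠ 0)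
    (h2 : ∀ t ≥ (0 : ℝ), (c₁ t + 2 * t * d₁ t) * (c₂ t + 2 * t * d₂ t) ≠ 0)
    (p : V) (t : ℝ) (ht : t = ‖p‖ ^ 2 / 2)
    (G : V × V → V × V → ℝ)
    (hG : ∀ z w, G z w = c₁ t * ⟪z.1, w.1⟫_ℝ + d₁ t * (⟪p, z.1⟫_ℝ * ⟪p, w.1⟫_ℝ)
      + c₂ t * ⟪z.2, w.2⟫_ℝ + d₂ t * (⟪p, z.2⟫_ℝ * ⟪p, w.2⟫_ℝ)) :
    ∀ z : V × V, (∀ w : V × V, G z w = 0) → z = 0 := by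
  have ht0 : t ≥ 0 := by rw [ht]; positivity
  have h2t : 2 * t = ‖p‖ ^ 2 := by rw [ht]; ring
  obtain ⟨hc1, hc2⟩ := mul_ne_zero_iff.mp (h1 t ht0)
  obtain ⟨hcd1, hcd2⟩ := mul_ne_zero_iff.mp (h2 t ht0)
  rw [show 2 * t * d₁ t = ‖p‖ ^ 2 * d₁ t by rw [← h2t]] at hcd1
  rw [show 2 * t * d₂ t = ‖p‖ ^ 2 * d₂ t by rw [← h2t]] at hcd2
  rintro ⟨x, α⟩ hz
  have hx : x = 0 := by
    apply aux_block (c₁ t) (d₁ t) p x hc1 hcd1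
    intro y
    have := hz (y, 0)
    rw [hG] at this
    simpa using this
  have ha : α = 0 := by
    apply aux_block (c₂ t) (d₂ t) p α hc2 hcd2
    intro ω
    have := hz (0, ω)
    rw [hG] at this
    simpa using this
  simp [hx, ha, Prod.ext_iff]
end
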